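/- For every player i, the potential F is affine in player i's block of variables; more precisely, for any joint distribution x = (x^1,…,x^N) and any y^i ∈ ℝ^{(T+1)×S×A}, F(y^i, x^{−i}) − F(x^i, x^{−i}) = ∑_{t,s,a} ℓ^i_{tsa}(x) (y^i_{tsa} − x^i_{tsa}), where (y^i, x^{−i}) denotes x with the i-th block replaced by y^i. -/

import Mathlib

open Finset

/-- State-level collision risk `Dⁱₜₛ(x) = 1 - ∏_{j ≠ i} (1 - ∑ₐ xʲₜₛₐ)`. -/
noncomputable def Drisk {N T S A : ℕ} (x : Fin N → Fin (T + 1) → Fin S → Fin A → ℝ)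
    (i : Fin N) (t : Fin (T + 1)) (s : Fin S) : ℝ :=
  1 - ∏ j ∈ univ.erase i, (1 - ∑ a, x j t s a)

/-- State-action-level collision risk `Gⁱₜₛₐ(x) = 1 - ∏_{j ≠ i} (1 - xʲₜₛₐ)`. -/
noncomputable def Grisk {N T S A : ℕ} (x : Fin N → Fin (T + 1) → Fin S → Fin A → ℝ)
    (i : Fin N) (t : Fin (T + 1)) (s : Fin S) (a : Fin A) : ℝ :=
  1 - ∏ j ∈ univ.erase i, (1 - x j t s a)

/-- Congestion cost `ℓⁱₜₛₐ(x) = Cⁱₜₛₐ + k (Dⁱₜₛ(x) + Gⁱₜₛₐ(x))`. -/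
noncomputable def ell {N T S A : ℕ} (k : ℝ) (C : Fin N → Fin (T + 1) → Fin S → Fin A → ℝ)
    (x : Fin N → Fin (T + 1) → Fin S → Fin A → ℝ)
    (i : Fin N) (t : Fin (T + 1)) (s : Fin S) (a : Fin A) : ℝ :=
  C i t s a + k * (Drisk x i t s + Grisk x i t s a)

/-- The potential function `F`. -/
noncomputable def potF {N T S A : ℕ} (k : ℝ) (C : Fin N → Fin (T + 1) → Fin S → Fin A → ℝ)
    (x : Fin N → Fin (T + 1) → Fin S → Fin A → ℝ) : ℝ :=
  (∑ i, ∑ t, ∑ s, ∑ a, x i t s a * C i t s a) +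
    k * ∑ t, ∑ s,
      ((∑ i, ∑ a, 2 * x i t s a) + (∏ i, (1 - ∑ a, x i t s a)) +
        ∑ a, ∏ i, (1 - x i t s a))

/-
Every term of `F` is either linear in each block `xʲ` or a product over all players of factors
depending on a single block; such a product is affine in `xⁱ`, with slope the product of the other
factors. The other factors are exactly `1 - Dⁱ` and `1 - Gⁱ`, and the constants `-1` they
contribute cancel against the linear term `2 ∑ xⁱ`.
-/

section UpdateBlock

variable {ι α : Type*} [Fintype ι] [DecidableEq ι]

@[to_additive]
theorem prod_apply_update_eq_mul_prod_erase {M : Type*} [CommMonoid M] (f : ι → α → M)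
    (x : ι → α) (i : ι) (y : α) :
    ∏ j, f j (Function.update x i y j) = f i y * ∏ j ∈ univ.erase i, f j (x j) := by
  rw [← mul_prod_erase univ _ (mem_univ i), Function.update_self]
  congr 1
  exact prod_congr rfl fun j hj => by rw [Function.update_of_ne (ne_of_mem_erase hj)]

theorem sum_apply_update_sub {M : Type*} [AddCommGroup M] (f : ι → α → M) (x : ι → α) (i : ι)
    (y : α) : ∑ j, f j (Function.update x i y j) - ∑ j, f j (x j) = f i y - f i (x i) := by
  rw [sum_apply_update_eq_add_sum_erase, ← add_sum_erase univ _ (mem_univ i),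
    add_sub_add_right_eq_sub]

theorem prod_apply_update_sub {R : Type*} [CommRing R] (f : ι → α → R) (x : ι → α) (i : ι)
    (y : α) :
    ∏ j, f j (Function.update x i y j) - ∏ j, f j (x j)
      = (f i y - f i (x i)) * ∏ j ∈ univ.erase i, f j (x j) := by
  rw [prod_apply_update_eq_mul_prod_erase, ← mul_prod_erase univ _ (mem_univ i), sub_mul]

end UpdateBlock

section Congestion

variable {N T S A : ℕ}

def congestion (x : Fin N → Fin (T + 1) → Fin S → Fin A → ℝ) (t : Fin (T + 1)) (s : Fin S) : ℝ :=
  (∑ i, ∑ a, 2 * x i t s a) + (∏ i, (1 - ∑ a, x i t s a)) + ∑ a, ∏ i, (1 - x i t s a)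

theorem congestion_update_sub (x : Fin N → Fin (T + 1) → Fin S → Fin A → ℝ) (i : Fin N)
    (y : Fin (T + 1) → Fin S → Fin A → ℝ) (t : Fin (T + 1)) (s : Fin S) :
    congestion (Function.update x i y) t s - congestion x t s
      = ∑ a, (Drisk x i t s + Grisk x i t s a) * (y t s a - x i t s a) := by
  have hlin := sum_apply_update_sub (fun _ z => ∑ a, 2 * z t s a) x i y
  have hD := prod_apply_update_sub (fun _ z => 1 - ∑ a, z t s a) x i y
  have hG a := prod_apply_update_sub (fun _ z => 1 - z t s a) x i y
  have hmass : 1 - ∑ a, y t s a - (1 - ∑ a, x i t s a) = ∑ a, (x i t s a - y t s a) := by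
    rw [sum_sub_distrib]; ring
  calc congestion (Function.update x i y) t s - congestion x t s
      = (∑ j, ∑ a, 2 * Function.update x i y j t s a - ∑ j, ∑ a, 2 * x j t s a)
          + (∏ j, (1 - ∑ a, Function.update x i y j t s a) - ∏ j, (1 - ∑ a, x j t s a))
          + ∑ a, (∏ j, (1 - Function.update x i y j t s a) - ∏ j, (1 - x j t s a)) := by
        rw [congestion, congestion, sum_sub_distrib]; ring
    _ = ∑ a, (2 * y t s a - 2 * x i t s a)
          + (∑ a, (x i t s a - y t s a)) * ∏ j ∈ univ.erase i, (1 - ∑ a, x j t s a)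
          + ∑ a, (x i t s a - y t s a) * ∏ j ∈ univ.erase i, (1 - x j t s a) := by
        rw [hlin, hD, hmass, ← sum_sub_distrib]
        congr 1
        exact sum_congr rfl fun a _ => by rw [hG]; ring
    _ = ∑ a, (Drisk x i t s + Grisk x i t s a) * (y t s a - x i t s a) := by
        rw [sum_mul, ← sum_add_distrib, ← sum_add_distrib]
        exact sum_congr rfl fun a _ => by rw [Drisk, Grisk]; ring

theorem potF_eq_add_mul_sum_congestion (k : ℝ) (C x : Fin N → Fin (T + 1) → Fin S → Fin A → ℝ) :
    potF k C x = ∑ j, ∑ t, ∑ s, ∑ a, x j t s a * C j t s a + k * ∑ t, ∑ s, congestion x t s :=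
  rfl

end Congestion

theorem potential_affine_in_own_block_general
    (N T S A : ℕ) (k : ℝ)
    (C : Fin N → Fin (T + 1) → Fin S → Fin A → ℝ)
    (x : Fin N → Fin (T + 1) → Fin S → Fin A → ℝ) (i : Fin N)
    (y : Fin (T + 1) → Fin S → Fin A → ℝ) :
    potF k C (Function.update x i y) - potF k C x
      = ∑ t, ∑ s, ∑ a, ell k C x i t s a * (y t s a - x i t s a) := by
  have hcost := sum_apply_update_sub (fun j z => ∑ t, ∑ s, ∑ a, z t s a * C j t s a) x i y
  calc potF k C (Function.update x i y) - potF k C x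
      = (∑ t, ∑ s, ∑ a, y t s a * C i t s a - ∑ t, ∑ s, ∑ a, x i t s a * C i t s a)
          + k * ∑ t, ∑ s, (congestion (Function.update x i y) t s - congestion x t s) := by
        simp only [potF_eq_add_mul_sum_congestion, ← hcost, sum_sub_distrib]
        ring
    _ = ∑ t, ∑ s, ∑ a, ell k C x i t s a * (y t s a - x i t s a) := by
        simp only [congestion_update_sub, ← sum_sub_distrib, mul_sum, ← sum_add_distrib]
        exact sum_congr rfl fun t _ => sum_congr rfl fun s _ => sum_congr rfl fun a _ => by
          rw [ell]; ring

/-- The potential `F` is affine in each player's block: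
`F(yⁱ, x⁻ⁱ) - F(xⁱ, x⁻ⁱ) = ∑_{t,s,a} ℓⁱₜₛₐ(x) (yⁱₜₛₐ - xⁱₜₛₐ)`. -/
theorem potential_affine_in_own_block
    (N T S A : ℕ) (k : ℝ) (hk : 0 ≤ k)
    (C : Fin N → Fin (T + 1) → Fin S → Fin A → ℝ)
    (x : Fin N → Fin (T + 1) → Fin S → Fin A → ℝ) (i : Fin N)
    (y : Fin (T + 1) → Fin S → Fin A → ℝ) :
    potF k C (Function.update x i y) - potF k C x
      = ∑ t, ∑ s, ∑ a, ell k C x i t s a * (y t s a - x i t s a) :=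
  potential_affine_in_own_block_general N T S A k C x i y
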